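/- Let G be the Cayley graph of the symmetric group S_n (n ≥ 3) with the set of all transpositions as generators. Then Ric(G) = 2: for every f:S_n→ℝ and every x∈S_n, Γ₂(f)(x) ≥ 2·Γ(f)(x), and 2 is the largest constant with this property. -/

import Mathlib

noncomputable section
open Matrix

/-- The graph Laplacian: `Δ f (x) = Σ_{y ~ x} (f y - f x)`. -/
def lap {V : Type*} (G : SimpleGraph V) (f : V → ℝ) (x : V) : ℝ :=
  ∑ᶠ y ∈ {y | G.Adj x y}, (f y - f x)

/-- The carré du champ `Γ(f,g)(x) = (1/2) Σ_{y ~ x} (f x - f y)(g x - g y)`. -/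
def gam {V : Type*} (G : SimpleGraph V) (f g : V → ℝ) (x : V) : ℝ :=
  (1/2) * ∑ᶠ y ∈ {y | G.Adj x y}, (f x - f y) * (g x - g y)

/-- The iterated carré du champ `Γ₂(f) = (1/2) Δ Γ(f) - Γ(f, Δ f)`. -/
def gam2 {V : Type*} (G : SimpleGraph V) (f : V → ℝ) (x : V) : ℝ :=
  (1/2) * lap G (gam G f f) x - gam G f (lap G f) x

/-- `Ric(G) ≥ K` : the Bochner inequality `Γ₂(f)(x) ≥ K Γ(f)(x)` holds for all `f, x`. -/
def RicGE {V : Type*} (G : SimpleGraph V) (K : ℝ) : Prop :=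
  ∀ (f : V → ℝ) (x : V), K * gam G f f x ≤ gam2 G f x

/-- The Cayley graph of the symmetric group with all transpositions as generators:
`x ~ y` iff `x⁻¹ * y` is a transposition. -/
def transpositionGraph (n : ℕ) : SimpleGraph (Equiv.Perm (Fin n)) where
  Adj x y := (x⁻¹ * y).IsSwap
  symm := by
    constructor
    rintro x y ⟨a, b, hab, hf⟩
    refine ⟨a, b, hab, ?_⟩
    have h : (x⁻¹ * y)⁻¹ = Equiv.swap a b := by rw [hf, Equiv.swap_inv]
    simpa [_root_.mul_inv_rev] using h
  loopless := by
    constructor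
    rintro x ⟨a, b, hab, hf⟩
    rw [inv_mul_cancel] at hf
    exact hab (by
      have := congrArg (fun e : Equiv.Perm (Fin n) => e a) hf
      simpa [Equiv.swap_apply_left] using this)

/-!
Expanding the definitions, `Γ₂(f)(x)` is `1/4` times a double sum over generators `s, t` of
`(f(xst) - 2 f(xs) + f(x))² - (f(xs) - f(xt))²`. Since transpositions are involutions, the
diagonal `s = t` contributes exactly `2 Γ(f)(x)`. The off-diagonal sum is invariant under the
bijection `(s, t) ↦ (t, tst)` and its inverse `(s, t) ↦ (sts, s)`, both of which preserve `st`.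
Averaging with weights `1/2, 1/4, 1/4` makes every term nonnegative: commuting transpositions give
a square, and non-commuting ones satisfy the braid relation `sts = tst`, which closes the orbit
into a triangle whose contribution is a sum of two squares. The graph distance to the identity,
capped at `2`, makes every off-diagonal term vanish, so the constant `2` is sharp.
-/

open Finset

lemma RicGE.le_of_gam2_eq_mul {V : Type*} {G : SimpleGraph V} {K c : ℝ} (hK : RicGE G K)
    {f : V → ℝ} {x : V} (h : gam2 G f x = c * gam G f f x) (hpos : 0 < gam G f f x) : K ≤ c :=
  le_of_mul_le_mul_right (h ▸ hK f x) hpos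

section CayleyGraph

variable {Γ : Type*} [Group Γ] {G : SimpleGraph Γ} {S : Finset Γ}

lemma neighborSet_eq_image (hG : ∀ x y, G.Adj x y ↔ x⁻¹ * y ∈ S) (x : Γ) :
    {y | G.Adj x y} = ↑(S.map (mulLeftEmbedding x)) := by
  ext y
  simp [hG]

lemma lap_eq_sum (hG : ∀ x y, G.Adj x y ↔ x⁻¹ * y ∈ S) (f : Γ → ℝ) (x : Γ) :
    lap G f x = ∑ s ∈ S, (f (x * s) - f x) := by
  rw [lap, neighborSet_eq_image hG, finsum_mem_coe_finset, sum_map]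
  rfl

lemma gam_eq_sum (hG : ∀ x y, G.Adj x y ↔ x⁻¹ * y ∈ S) (f g : Γ → ℝ) (x : Γ) :
    gam G f g x = 1 / 2 * ∑ s ∈ S, (f x - f (x * s)) * (g x - g (x * s)) := by
  rw [gam, neighborSet_eq_image hG, finsum_mem_coe_finset, sum_map]
  rfl

def gam2Term (f : Γ → ℝ) (x : Γ) (p : Γ × Γ) : ℝ :=
  (f (x * (p.1 * p.2)) - 2 * f (x * p.1) + f x) ^ 2 - (f (x * p.1) - f (x * p.2)) ^ 2

lemma gam2_eq_sum (hG : ∀ x y, G.Adj x y ↔ x⁻¹ * y ∈ S) (f : Γ → ℝ) (x : Γ) :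
    gam2 G f x = 1 / 4 * ∑ p ∈ S ×ˢ S, gam2Term f x p := by
  simp only [gam2, lap_eq_sum hG, gam_eq_sum hG, sum_product, mul_sum, ← sum_sub_distrib]
  refine sum_congr rfl fun s _ ↦ sum_congr rfl fun t _ ↦ ?_
  rw [gam2Term, ← mul_assoc x s t]
  ring

lemma gam2_eq_two_mul_gam_add_sum_offDiag (hG : ∀ x y, G.Adj x y ↔ x⁻¹ * y ∈ S)
    (hS : ∀ s ∈ S, s * s = 1) (f : Γ → ℝ) (x : Γ) :
    gam2 G f x = 2 * gam G f f x + 1 / 4 * ∑ p ∈ S.offDiag, gam2Term f x p := by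
  classical
  have hdiag : ∑ p ∈ S.diag, gam2Term f x p =
      4 * ∑ s ∈ S, (f x - f (x * s)) * (f x - f (x * s)) := by
    rw [sum_diag, mul_sum]
    refine sum_congr rfl fun s hs ↦ ?_
    rw [gam2Term, hS s hs, mul_one]
    ring
  rw [gam2_eq_sum hG, gam_eq_sum hG, ← diag_union_offDiag, sum_union (disjoint_diag_offDiag S),
    hdiag]
  ring

lemma gam2Term_orbit_nonneg (f : Γ → ℝ) (x : Γ) {s t : Γ} (hs : s * s = 1) (ht : t * t = 1)
    (hst : Commute s t ∨ s * t * s = t * s * t) :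
    0 ≤ 2 * gam2Term f x (s, t) + gam2Term f x (t, t * s * t) + gam2Term f x (s * t * s, s) := by
  rcases hst with hc | hb
  · have e₁ : t * s * t = s := by rw [← hc.eq, mul_assoc, ht, mul_one]
    have e₂ : s * t * s = t := by rw [hc.eq, mul_assoc, hs, mul_one]
    rw [e₁, e₂]
    simp only [gam2Term]
    rw [← hc.eq]
    nlinarith [sq_nonneg (f (x * (s * t)) - f (x * s) - f (x * t) + f x)]
  · have e₁ : t * (t * s * t) = s * t := by rw [← mul_assoc, ← mul_assoc, ht, one_mul]
    have e₂ : t * s * t * s = s * t := by rw [← hb, mul_assoc, hs, mul_one]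
    rw [hb]
    simp only [gam2Term]
    rw [e₁, e₂]
    nlinarith [sq_nonneg (2 * f (x * (s * t)) + 2 * f x - 2 * f (x * s) - f (x * t)
        - f (x * (t * s * t))), sq_nonneg (f (x * s) - f (x * (t * s * t)))]

lemma conj_conj_of_mul_self {s t : Γ} (ht : t * t = 1) : t * (t * s * t) * t = s := by
  simp only [mul_assoc, ht, mul_one]
  rw [← mul_assoc, ht, one_mul]

lemma conj_ne_of_mul_self {s t : Γ} (ht : t * t = 1) (hst : s ≠ t) : t * s * t ≠ t := by
  intro h
  apply hst
  apply mul_left_cancel (a := t)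
  apply mul_right_cancel (b := t)
  rw [h, ht, one_mul]

lemma sum_gam2Term_offDiag_nonneg (hinv : ∀ s ∈ S, s * s = 1)
    (hconj : ∀ s ∈ S, ∀ t ∈ S, t * s * t ∈ S)
    (hbraid : ∀ s ∈ S, ∀ t ∈ S, Commute s t ∨ s * t * s = t * s * t)
    (f : Γ → ℝ) (x : Γ) : 0 ≤ ∑ p ∈ S.offDiag, gam2Term f x p := by
  set F := gam2Term f x
  have hmaps : ∀ p ∈ S.offDiag, (p.2, p.2 * p.1 * p.2) ∈ S.offDiag := by
    rintro ⟨s, t⟩ hp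
    obtain ⟨hs, ht, hst⟩ := mem_offDiag.1 hp
    exact mem_offDiag.2 ⟨ht, hconj s hs t ht, (conj_ne_of_mul_self (hinv t ht) hst).symm⟩
  have hmaps' : ∀ p ∈ S.offDiag, (p.1 * p.2 * p.1, p.1) ∈ S.offDiag := by
    rintro ⟨s, t⟩ hp
    obtain ⟨hs, ht, hst⟩ := mem_offDiag.1 hp
    exact mem_offDiag.2 ⟨hconj t ht s hs, hs, conj_ne_of_mul_self (hinv s hs) hst.symm⟩
  have hleft : ∀ p ∈ S.offDiag, (p.2 * (p.2 * p.1 * p.2) * p.2, p.2) = p := by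
    rintro ⟨s, t⟩ hp
    rw [conj_conj_of_mul_self (hinv t (mem_offDiag.1 hp).2.1)]
  have hright : ∀ p ∈ S.offDiag, (p.1, p.1 * (p.1 * p.2 * p.1) * p.1) = p := by
    rintro ⟨s, t⟩ hp
    rw [conj_conj_of_mul_self (hinv s (mem_offDiag.1 hp).1)]
  have hΦ : ∑ p ∈ S.offDiag, F (p.2, p.2 * p.1 * p.2) = ∑ p ∈ S.offDiag, F p :=
    sum_nbij' _ _ hmaps hmaps' hleft hright fun _ _ ↦ rfl
  have hΨ : ∑ p ∈ S.offDiag, F (p.1 * p.2 * p.1, p.1) = ∑ p ∈ S.offDiag, F p :=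
    sum_nbij' _ _ hmaps' hmaps hright hleft fun _ _ ↦ rfl
  have horbit := sum_nonneg fun (p : Γ × Γ) (hp : p ∈ S.offDiag) ↦
    gam2Term_orbit_nonneg f x (hinv _ (mem_offDiag.1 hp).1) (hinv _ (mem_offDiag.1 hp).2.1)
      (hbraid _ (mem_offDiag.1 hp).1 _ (mem_offDiag.1 hp).2.1)
  rw [sum_add_distrib, sum_add_distrib, ← mul_sum, hΦ, hΨ] at horbit
  linarith

theorem ricGE_two_of_braided_involutions (hG : ∀ x y, G.Adj x y ↔ x⁻¹ * y ∈ S)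
    (hinv : ∀ s ∈ S, s * s = 1)
    (hconj : ∀ s ∈ S, ∀ t ∈ S, t * s * t ∈ S)
    (hbraid : ∀ s ∈ S, ∀ t ∈ S, Commute s t ∨ s * t * s = t * s * t) : RicGE G 2 := by
  intro f x
  rw [gam2_eq_two_mul_gam_add_sum_offDiag hG hinv]
  linarith [sum_gam2Term_offDiag_nonneg hinv hconj hbraid f x]

end CayleyGraph

namespace Equiv.Perm

variable {α : Type*} [DecidableEq α] {σ τ : Perm α}

lemma IsSwap.mul_self (hσ : σ.IsSwap) : σ * σ = 1 := by
  obtain ⟨a, b, -, rfl⟩ := hσ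
  exact swap_mul_self a b

lemma IsSwap.conj (hσ : σ.IsSwap) (τ : Perm α) : (τ * σ * τ⁻¹).IsSwap := by
  obtain ⟨a, b, hab, rfl⟩ := hσ
  exact ⟨τ a, τ b, τ.injective.ne hab, (swap_apply_apply τ a b).symm⟩

lemma swap_mul_swap_mul_swap_eq {a b c : α} (hab : a ≠ b) (hac : a ≠ c) :
    swap a b * swap a c * swap a b = swap a c * swap a b * swap a c := by
  ext z
  simp only [Perm.mul_apply, swap_apply_def]
  split_ifs <;> grind

lemma commute_swap_swap {a b c d : α} (hac : a ≠ c) (had : a ≠ d) (hbc : b ≠ c)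
    (hbd : b ≠ d) :
    Commute (swap a b) (swap c d) := by
  show _ = _
  ext z
  simp only [Perm.mul_apply, swap_apply_def]
  split_ifs <;> grind

lemma IsSwap.commute_or_braid (hσ : σ.IsSwap) (hτ : τ.IsSwap) :
    Commute σ τ ∨ σ * τ * σ = τ * σ * τ := by
  obtain ⟨a, b, hab, rfl⟩ := hσ
  obtain ⟨c, d, hcd, rfl⟩ := hτ
  by_cases h : a = c ∨ a = d ∨ b = c ∨ b = d
  · right
    rcases h with rfl | rfl | rfl | rfl
    · exact swap_mul_swap_mul_swap_eq hab hcd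
    · rw [swap_comm c]
      exact swap_mul_swap_mul_swap_eq hab hcd.symm
    · rw [swap_comm a]
      exact swap_mul_swap_mul_swap_eq hab.symm hcd
    · rw [swap_comm a, swap_comm c]
      exact swap_mul_swap_mul_swap_eq hab.symm hcd.symm
  · simp only [not_or] at h
    exact Or.inl (commute_swap_swap h.1 h.2.1 h.2.2.1 h.2.2.2)

lemma IsSwap.not_isSwap_mul [Fintype α] (hσ : σ.IsSwap) (hτ : τ.IsSwap) :
    ¬(σ * τ).IsSwap := by
  intro h
  have := h.sign_eq
  rw [map_mul, hσ.sign_eq, hτ.sign_eq] at this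
  norm_num at this

end Equiv.Perm

section Transpositions

open Equiv

variable {n : ℕ}

open scoped Classical in
def transpositions (n : ℕ) : Finset (Perm (Fin n)) :=
  univ.filter Perm.IsSwap

lemma mem_transpositions {σ : Perm (Fin n)} : σ ∈ transpositions n ↔ σ.IsSwap := by
  simp [transpositions]

lemma transpositionGraph_adj_iff (x y : Perm (Fin n)) :
    (transpositionGraph n).Adj x y ↔ x⁻¹ * y ∈ transpositions n := by
  rw [mem_transpositions]
  rfl

lemma mul_self_of_mem_transpositions {s : Perm (Fin n)} (hs : s ∈ transpositions n) : s * s = 1 :=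
  (mem_transpositions.1 hs).mul_self

theorem ricGE_two_transpositionGraph : RicGE (transpositionGraph n) 2 := by
  refine ricGE_two_of_braided_involutions transpositionGraph_adj_iff
    (fun _ ↦ mul_self_of_mem_transpositions) (fun s hs t ht ↦ ?_) (fun s hs t ht ↦ ?_)
  · rw [mem_transpositions] at hs ht ⊢
    simpa only [inv_eq_of_mul_eq_one_right ht.mul_self] using hs.conj t
  · exact (mem_transpositions.1 hs).commute_or_braid (mem_transpositions.1 ht)

lemma exists_gam2_eq_two_mul_gam_transpositionGraph (hn : 2 ≤ n) :
    ∃ (f : Perm (Fin n) → ℝ) (x : Perm (Fin n)),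
      gam2 (transpositionGraph n) f x = 2 * gam (transpositionGraph n) f f x ∧
        0 < gam (transpositionGraph n) f f x := by
  classical
  let f : Perm (Fin n) → ℝ := fun σ ↦ if σ = 1 then 0 else if σ.IsSwap then 1 else 2
  have hf₁ : f 1 = 0 := if_pos rfl
  have hf₂ : ∀ s ∈ transpositions n, f s = 1 := fun s hs ↦ by
    have hs := mem_transpositions.1 hs
    simp only [f, if_neg hs.isCycle.ne_one, if_pos hs]
  have hf₃ : ∀ p ∈ (transpositions n).offDiag, f (p.1 * p.2) = 2 := fun p hp ↦ by
    obtain ⟨hs, ht, hst⟩ := mem_offDiag.1 hp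
    have hne : p.1 * p.2 ≠ 1 := fun h ↦
      hst (eq_inv_of_mul_eq_one_left h ▸
        inv_eq_of_mul_eq_one_right (mul_self_of_mem_transpositions ht))
    simp only [f, if_neg hne,
      if_neg ((mem_transpositions.1 hs).not_isSwap_mul (mem_transpositions.1 ht))]
  refine ⟨f, 1, ?_, ?_⟩
  · rw [gam2_eq_two_mul_gam_add_sum_offDiag transpositionGraph_adj_iff
      (fun _ ↦ mul_self_of_mem_transpositions), sum_eq_zero, mul_zero, add_zero]
    intro p hp
    obtain ⟨hs, ht, -⟩ := mem_offDiag.1 hp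
    simp only [gam2Term, one_mul, hf₁, hf₂ _ hs, hf₂ _ ht, hf₃ p hp]
    norm_num
  · have hne : (transpositions n).Nonempty :=
      ⟨swap ⟨0, by omega⟩ ⟨1, by omega⟩, mem_transpositions.2 ⟨_, _, by simp, rfl⟩⟩
    rw [gam_eq_sum transpositionGraph_adj_iff]
    exact mul_pos one_half_pos (sum_pos (fun s hs ↦ by simp [hf₁, hf₂ s hs]) hne)

end Transpositions

/-- for `n ≥ 3`, the Cayley graph of `Sₙ` with all transpositions has
`Ric = 2`. -/
theorem ric_transpositions (n : ℕ) (hn : 3 ≤ n) :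
    RicGE (transpositionGraph n) 2 ∧
      ∀ K : ℝ, RicGE (transpositionGraph n) K → K ≤ 2 := by
  refine ⟨ricGE_two_transpositionGraph, fun K hK ↦ ?_⟩
  obtain ⟨f, x, hf, hpos⟩ := exists_gam2_eq_two_mul_gam_transpositionGraph (by omega : 2 ≤ n)
  exact hK.le_of_gam2_eq_mul hf hpos
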